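/- Suppose the nonnegative adapted process S (one-dimensional, discrete time) satisfies (E[S_{k+1}|F_k])² ≤ C · Var(S_{k+1}|F_k) a.s. for a constant C (modified above bounded mean-variance tradeoff) and S is a submartingale. Then S has bounded mean-variance tradeoff: (E[ΔS_{k+1}|F_k])² ≤ 4C · Var(ΔS_{k+1}|F_k) a.s., where ΔS_{k+1} = S_{k+1} − S_k. -/

import Mathlib

open MeasureTheory ProbabilityTheory

/-! Since `S k` is `ℱ k`-measurable, subtracting it shifts the conditional mean by `S k` and leaves
the conditional variance unchanged. The submartingale property and nonnegativity give
`0 ≤ S k ≤ E[S (k+1)|ℱ k]`, so `(E[ΔS (k+1)|ℱ k])² ≤ (E[S (k+1)|ℱ k])²`, and the hypothesis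
bounds the latter by `C` times the common conditional variance. -/

section CondVar

variable {Ω : Type*} {m m₀ : MeasurableSpace Ω} {μ : Measure Ω} {X Y : Ω → ℝ}

lemma condExp_sub_of_stronglyMeasurable_right (hm : m ≤ m₀) [SigmaFinite (μ.trim hm)]
    (hYm : StronglyMeasurable[m] Y) (hX : Integrable X μ) (hY : Integrable Y μ) :
    μ[X - Y | m] =ᵐ[μ] μ[X | m] - Y := by
  filter_upwards [condExp_sub hX hY m] with ω hω
  rw [hω, condExp_of_stronglyMeasurable hm hYm hY]

lemma condVar_sub_of_stronglyMeasurable_right (hm : m ≤ m₀) [SigmaFinite (μ.trim hm)]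
    (hYm : StronglyMeasurable[m] Y) (hX : Integrable X μ) (hY : Integrable Y μ) :
    Var[X - Y; μ | m] =ᵐ[μ] Var[X; μ | m] := by
  refine condExp_congr_ae ?_
  filter_upwards [condExp_sub_of_stronglyMeasurable_right hm hYm hX hY] with ω hω
  simp only [Pi.pow_apply, Pi.sub_apply, hω]
  ring

end CondVar

lemma sq_sub_le_four_mul_of_sq_le {a b C v : ℝ} (hb : 0 ≤ b) (hba : b ≤ a) (h : a ^ 2 ≤ C * v) :
    (a - b) ^ 2 ≤ 4 * C * v := by
  nlinarith [sq_nonneg a, mul_nonneg hb (sub_nonneg.mpr hba)]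

theorem bounded_mean_variance_of_modified_above_general
    {Ω : Type*} {m0 : MeasurableSpace Ω} (μ : Measure Ω) [IsProbabilityMeasure μ]
    (T : ℕ) (ℱ : Filtration ℕ m0)
    (S : ℕ → Ω → ℝ)
    (hnonneg : ∀ k ω, 0 ≤ S k ω)
    (hL2 : ∀ k, MemLp (S k) 2 μ)
    (hsub : Submartingale S ℱ μ)
    (C : ℝ)
    (hmod : ∀ k < T, ∀ᵐ ω ∂μ,
      ((μ[S (k + 1)|ℱ k]) ω) ^ 2
        ≤ C * ((μ[(fun ω' => S (k + 1) ω' ^ 2)|ℱ k]) ω - ((μ[S (k + 1)|ℱ k]) ω) ^ 2)) :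
    ∀ k < T, ∀ᵐ ω ∂μ,
      ((μ[(fun ω' => S (k + 1) ω' - S k ω')|ℱ k]) ω) ^ 2
        ≤ 4 * C * ((μ[(fun ω' => (S (k + 1) ω' - S k ω') ^ 2)|ℱ k]) ω
            - ((μ[(fun ω' => S (k + 1) ω' - S k ω')|ℱ k]) ω) ^ 2) := by
  intro k hk
  have hSk : StronglyMeasurable[ℱ k] (S k) := hsub.stronglyAdapted k
  have hmean := condExp_sub_of_stronglyMeasurable_right (ℱ.le k) hSk
    (hsub.integrable (k + 1)) (hsub.integrable k)
  have hvar := condVar_sub_of_stronglyMeasurable_right (ℱ.le k) hSk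
    (hsub.integrable (k + 1)) (hsub.integrable k)
  have hvarΔ := condVar_ae_eq_condExp_sq_sub_sq_condExp (ℱ.le k) ((hL2 (k + 1)).sub (hL2 k))
  have hvarS := condVar_ae_eq_condExp_sq_sub_sq_condExp (ℱ.le k) (hL2 (k + 1))
  filter_upwards [hmean, hvar, hvarΔ, hvarS, hsub.ae_le_condExp k.le_succ, hmod k hk]
    with ω hmean hvar hvarΔ hvarS hle hmod
  simp only [Pi.sub_apply, Pi.pow_apply] at hmean hvarΔ hvarS
  change (μ[S (k + 1) - S k|ℱ k]) ω ^ 2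
    ≤ 4 * C * ((μ[(S (k + 1) - S k) ^ 2|ℱ k]) ω - (μ[S (k + 1) - S k|ℱ k]) ω ^ 2)
  rw [← hvarΔ, hvar, hvarS, hmean]
  exact sq_sub_le_four_mul_of_sq_le (hnonneg k ω) hle hmod

/-- If the nonnegative adapted submartingale `S` satisfies the modified above bounded
mean-variance tradeoff `(E[S (k+1)|ℱ k])² ≤ C · Var(S (k+1)|ℱ k)` a.s., then `S` has
bounded mean-variance tradeoff: `(E[ΔS (k+1)|ℱ k])² ≤ 4C · Var(ΔS (k+1)|ℱ k)` a.s.,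
where `ΔS (k+1) = S (k+1) - S k`. -/
theorem bounded_mean_variance_of_modified_above
    {Ω : Type*} {m0 : MeasurableSpace Ω} (μ : Measure Ω) [IsProbabilityMeasure μ]
    (T : ℕ) (ℱ : Filtration ℕ m0)
    (S : ℕ → Ω → ℝ)
    (hadapted : StronglyAdapted ℱ S)
    (hnonneg : ∀ k ω, 0 ≤ S k ω)
    (hL2 : ∀ k, MemLp (S k) 2 μ)
    (hsub : Submartingale S ℱ μ)
    (C : ℝ) (hC : 0 < C)
    (hmod : ∀ k < T, ∀ᵐ ω ∂μ,
      ((μ[S (k + 1)|ℱ k]) ω) ^ 2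
        ≤ C * ((μ[(fun ω' => S (k + 1) ω' ^ 2)|ℱ k]) ω - ((μ[S (k + 1)|ℱ k]) ω) ^ 2)) :
    ∀ k < T, ∀ᵐ ω ∂μ,
      ((μ[(fun ω' => S (k + 1) ω' - S k ω')|ℱ k]) ω) ^ 2
        ≤ 4 * C * ((μ[(fun ω' => (S (k + 1) ω' - S k ω') ^ 2)|ℱ k]) ω
            - ((μ[(fun ω' => S (k + 1) ω' - S k ω')|ℱ k]) ω) ^ 2) :=
  bounded_mean_variance_of_modified_above_general μ T ℱ S hnonneg hL2 hsub C hmod
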